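/- There exist a complete lattice L, a map g : 𝒫(L) → 𝒫(L) preserving arbitrary unions, and a map f : L → L preserving arbitrary suprema with sSup (g(X)) = f(sSup X) for all X ⊆ L, such that there is NO map h : DI(L) → DI(L) satisfying h(𝒞(X)) = 𝒞(g(X)) for all X ⊆ L. -/

import Mathlib

/-- A subset `S` of a complete lattice is *distributive* if
`a ⊓ sSup S = ⨆ s ∈ S, a ⊓ s` for every `a`. -/
def IsDistrib {L : Type*} [CompleteLattice L] (S : Set L) : Prop :=
  ∀ a : L, a ⊓ sSup S = ⨆ s ∈ S, a ⊓ s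

/-- A *distributive ideal* is a lower set closed under suprema of its
distributive subsets. -/
def IsDistribIdeal {L : Type*} [CompleteLattice L] (I : Set L) : Prop :=
  IsLowerSet I ∧ ∀ S : Set L, S ⊆ I → IsDistrib S → sSup S ∈ I

/-- The lower set `↓A` generated by `A`. -/
def downSet {L : Type*} [CompleteLattice L] (A : Set L) : Set L :=
  {x | ∃ a ∈ A, x ≤ a}

/-- The closure `𝒞(A) = { sSup B | B ⊆ ↓A, B distributive }`. -/
def distClosure {L : Type*} [CompleteLattice L] (A : Set L) : Set L :=
  {x | ∃ B : Set L, B ⊆ downSet A ∧ IsDistrib B ∧ x = sSup B}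

/-- The property of the counterexample in Statement 12: `g` preserves arbitrary
unions, `f` preserves arbitrary suprema, `sSup (g X) = f (sSup X)` for all `X`,
yet no map `h` on distributive ideals satisfies `h (𝒞 X) = 𝒞 (g X)`. -/
def NoLiftWitness (L : Type) [CompleteLattice L]
    (g : Set L → Set L) (f : L → L) : Prop :=
  (∀ 𝒳 : Set (Set L), g (⋃₀ 𝒳) = ⋃ X ∈ 𝒳, g X) ∧
  (∀ S : Set L, f (sSup S) = ⨆ a ∈ S, f a) ∧
  (∀ X : Set L, sSup (g X) = f (sSup X)) ∧
  ¬ ∃ h : Set L → Set L, ∀ X : Set L, h (distClosure X) = distClosure (g X)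

/-!
Take three lines `a`, `b`, `c` in the plane: `b ⊔ c = ⊤` while `a ⊓ b = a ⊓ c = ⊥`. Let `g`
replace `⊤` by the pair `{b, c}`; this preserves unions and suprema, so `f = id`. Since `⊤`
dominates everything, `𝒞 {⊤} = 𝒞 {a, ⊤} = L`, so a lift `h` would force
`𝒞 {b, c} = 𝒞 (g {a, ⊤}) ∋ a`. But every element of `↓{b, c}` meets `a` trivially, so no join
of such elements equals `a`.
-/

section

variable {L : Type*} [CompleteLattice L]

lemma isDistrib_singleton (x : L) : IsDistrib ({x} : Set L) := by
  intro a
  simp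

lemma mem_distClosure_of_mem_downSet {A : Set L} {x : L} (hx : x ∈ downSet A) :
    x ∈ distClosure A :=
  ⟨{x}, Set.singleton_subset_iff.2 hx, isDistrib_singleton x, sSup_singleton.symm⟩

lemma subset_distClosure (A : Set L) : A ⊆ distClosure A :=
  fun x hx => mem_distClosure_of_mem_downSet ⟨x, hx, le_rfl⟩

lemma distClosure_eq_univ_of_top_mem {A : Set L} (hA : ⊤ ∈ A) : distClosure A = Set.univ :=
  Set.eq_univ_of_forall fun _ => mem_distClosure_of_mem_downSet ⟨⊤, hA, le_top⟩

lemma not_mem_distClosure_of_disjoint {A : Set L} {a : L} (ha : a ≠ ⊥)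
    (hA : ∀ x ∈ A, Disjoint a x) : a ∉ distClosure A := by
  rintro ⟨B, hB, -, rfl⟩
  refine ha (sSup_eq_bot.2 fun x hx => ?_)
  obtain ⟨y, hy, hxy⟩ := hB hx
  exact disjoint_self.1 ((hA y hy).mono (le_sSup hx) hxy)

open Classical in
def splitTop (b c : L) (X : Set L) : Set L :=
  ⋃ x ∈ X, if x = ⊤ then {b, c} else {x}

variable {b c : L}

lemma splitTop_sUnion (𝒳 : Set (Set L)) :
    splitTop b c (⋃₀ 𝒳) = ⋃ X ∈ 𝒳, splitTop b c X := by
  simp only [splitTop, Set.sUnion_eq_biUnion, Set.biUnion_iUnion]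

lemma sSup_splitTop (hbc : Codisjoint b c) (X : Set L) : sSup (splitTop b c X) = sSup X := by
  classical
  have hpiece : ∀ x : L, sSup (if x = ⊤ then {b, c} else {x}) = x := by
    intro x
    split_ifs with hx
    · rw [sSup_pair, hx, hbc.eq_top]
    · exact sSup_singleton
  simp only [splitTop, sSup_iUnion, hpiece]
  exact sSup_eq_iSup.symm

lemma splitTop_singleton_top : splitTop b c {⊤} = {b, c} := by
  simp [splitTop]

lemma mem_splitTop {X : Set L} {x : L} (hx : x ∈ X) (hxt : x ≠ ⊤) : x ∈ splitTop b c X :=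
  Set.mem_biUnion hx (by simp [hxt])

end

theorem noLiftWitness_splitTop {L : Type} [CompleteLattice L] {a b c : L}
    (ha : a ≠ ⊥) (hab : Disjoint a b) (hac : Disjoint a c) (hbc : Codisjoint b c) :
    NoLiftWitness L (splitTop b c) id := by
  refine ⟨splitTop_sUnion, fun S => by simp [sSup_eq_iSup], sSup_splitTop hbc, ?_⟩
  rintro ⟨h, hh⟩
  have ha_top : a ≠ ⊤ := by
    rintro rfl
    rw [top_disjoint] at hab hac
    subst hab hac
    exact ha (codisjoint_self.1 hbc).symm
  have hsame : distClosure {b, c} = distClosure (splitTop b c {a, ⊤}) := by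
    rw [← splitTop_singleton_top, ← hh, ← hh,
      distClosure_eq_univ_of_top_mem (Set.mem_singleton _),
      distClosure_eq_univ_of_top_mem (Set.mem_insert_of_mem _ (Set.mem_singleton _))]
  have hmem : a ∈ distClosure {b, c} :=
    hsame ▸ subset_distClosure _ (mem_splitTop (Set.mem_insert _ _) ha_top)
  exact not_mem_distClosure_of_disjoint ha (by simp [hab, hac]) hmem

section Plane

variable (R : Type*) [Ring R]

open LinearMap

def diagonalLine : Submodule R (R × R) := ker (fst R R R - snd R R R)

variable {R} in
lemma mem_diagonalLine {p : R × R} : p ∈ diagonalLine R ↔ p.1 = p.2 := by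
  simp [diagonalLine, sub_eq_zero]

lemma diagonalLine_ne_bot [Nontrivial R] : diagonalLine R ≠ ⊥ :=
  (Submodule.ne_bot_iff _).2 ⟨(1, 1), mem_diagonalLine.2 rfl, by simp⟩

lemma disjoint_diagonalLine_ker_snd : Disjoint (diagonalLine R) (ker (snd R R R)) := by
  rw [Submodule.disjoint_def]
  rintro ⟨x, y⟩ hxy (rfl : y = 0)
  exact Prod.ext (mem_diagonalLine.1 hxy) rfl

lemma disjoint_diagonalLine_ker_fst : Disjoint (diagonalLine R) (ker (fst R R R)) := by
  rw [Submodule.disjoint_def]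
  rintro ⟨x, y⟩ hxy (rfl : x = 0)
  exact Prod.ext rfl (mem_diagonalLine.1 hxy).symm

lemma codisjoint_ker_snd_ker_fst : Codisjoint (ker (snd R R R)) (ker (fst R R R)) := by
  rw [codisjoint_iff, ker_snd, ker_fst, sup_range_inl_inr]

end Plane

/-- There exist a complete lattice `L`, a union-preserving `g : 𝒫(L) → 𝒫(L)`
and a suprema-preserving `f : L → L` with `sSup (g X) = f (sSup X)` for all
`X`, such that no map `h : DI(L) → DI(L)` satisfies `h (𝒞 X) = 𝒞 (g X)`. -/
theorem exists_no_lift :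
    ∃ (L : Type) (inst : CompleteLattice L) (g : Set L → Set L) (f : L → L),
      @NoLiftWitness L inst g f :=
  ⟨Submodule ℚ (ℚ × ℚ), inferInstance, _, id,
    noLiftWitness_splitTop (diagonalLine_ne_bot ℚ) (disjoint_diagonalLine_ker_snd ℚ)
      (disjoint_diagonalLine_ker_fst ℚ) (codisjoint_ker_snd_ker_fst ℚ)⟩
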